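/- For every s ≥ 2, the graph with vertices {a_0^j, a_1^j, b_1^j : 1 ≤ j ≤ s} ∪ {v_0, u_0, u_1} and edges {a_0^j v_0, v_0 a_1^j, u_0 b_1^j, u_1 b_1^j : 1 ≤ j ≤ s} (which is isomorphic to K_{1,s} × P_3) is antimagic; in particular the labeling f(a_0^j v_0)=j, f(v_0 a_1^j)=s+j, f(u_1 b_1^j)=2s+2j−1, f(u_0 b_1^j)=2s+2j is a bijection onto {1,...,4s} inducing pairwise distinct vertex sums. -/

import Mathlib

open SimpleGraph

/-- The direct (tensor) product of two simple graphs. -/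
def tensorProd {α β : Type*} (G : SimpleGraph α) (H : SimpleGraph β) :
    SimpleGraph (α × β) where
  Adj x y := G.Adj x.1 y.1 ∧ H.Adj x.2 y.2
  symm := ⟨fun _ _ h => ⟨h.1.symm, h.2.symm⟩⟩
  loopless := ⟨fun x h => G.irrefl h.1⟩

/-- The star `K_{1,s}`. -/
def starGraph (s : ℕ) : SimpleGraph (Fin 1 ⊕ Fin s) :=
  completeBipartiteGraph (Fin 1) (Fin s)

open scoped Classical in
/-- The vertex sum (weight) of `v` under an edge labeling `f`. -/
noncomputable def vertexSum {V : Type*} [Fintype V] (G : SimpleGraph V)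
    (f : Sym2 V → ℕ) (v : V) : ℕ :=
  ∑ e ∈ G.edgeFinset, if v ∈ e then f e else 0

open scoped Classical in
/-- A graph is antimagic if some bijection from its edge set onto
`{1, …, |E|}` yields pairwise distinct vertex sums. -/
def IsAntimagic {V : Type*} [Fintype V] (G : SimpleGraph V) : Prop :=
  ∃ f : Sym2 V → ℕ,
    Set.BijOn f G.edgeSet (Set.Icc 1 G.edgeFinset.card) ∧
    Function.Injective (vertexSum G f)


/-- Vertices of the graph isomorphic to `K_{1,s} × P_3`. -/
inductive V10 (s : ℕ) where
  | a0 (j : Fin s)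
  | a1 (j : Fin s)
  | b1 (j : Fin s)
  | v0
  | u0
  | u1
  deriving DecidableEq, Fintype

/-- The graph isomorphic to `K_{1,s} × P_3`, with edges
`a_0^j v_0`, `v_0 a_1^j`, `u_0 b_1^j`, `u_1 b_1^j`. -/
def G10 (s : ℕ) : SimpleGraph (V10 s) :=
  SimpleGraph.fromRel (fun x y =>
    match x, y with
    | .a0 _, .v0 => True
    | .a1 _, .v0 => True
    | .b1 _, .u0 => True
    | .b1 _, .u1 => True
    | _, _ => False)

/-- One-sided description of the labeling:
`f(a_0^j v_0) = j`, `f(v_0 a_1^j) = s + j`, `f(u_1 b_1^j) = 2s + 2j − 1`,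
`f(u_0 b_1^j) = 2s + 2j` (with `j` ranging over `1, …, s`). -/
def g10 (s : ℕ) : V10 s → V10 s → ℕ := fun x y =>
  match x, y with
  | .a0 j, .v0 => j.1 + 1
  | .a1 j, .v0 => s + (j.1 + 1)
  | .b1 j, .u1 => 2 * s + 2 * (j.1 + 1) - 1
  | .b1 j, .u0 => 2 * s + 2 * (j.1 + 1)
  | _, _ => 0

/-- The labeling as a function on unordered pairs. -/
def f10 (s : ℕ) : Sym2 (V10 s) → ℕ :=
  Sym2.lift ⟨fun x y => g10 s x y + g10 s y x, fun x y => by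
    simp [Nat.add_comm]⟩

def F10 (s : ℕ) : Fin s × Fin 4 → Sym2 (V10 s) := fun p =>
  match p.2 with
  | ⟨0, _⟩ => s(.a0 p.1, .v0)
  | ⟨1, _⟩ => s(.a1 p.1, .v0)
  | ⟨2, _⟩ => s(.b1 p.1, .u1)
  | ⟨3, _⟩ => s(.b1 p.1, .u0)

def E10 (s : ℕ) : Finset (Sym2 (V10 s)) := Finset.univ.image (F10 s)

lemma F10_inj (s : ℕ) : Function.Injective (F10 s) := by
  rintro ⟨j, i⟩ ⟨k, l⟩ h
  fin_cases i <;> fin_cases l <;>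
    simp_all [F10, Sym2.eq_iff]

lemma mem_E10 (s : ℕ) (e : Sym2 (V10 s)) :
    e ∈ E10 s ↔ ∃ j : Fin s, e = s(.a0 j, .v0) ∨ e = s(.a1 j, .v0) ∨
      e = s(.b1 j, .u1) ∨ e = s(.b1 j, .u0) := by
  simp only [E10, Finset.mem_image, Finset.mem_univ, true_and]
  constructor
  · rintro ⟨⟨j, i⟩, rfl⟩
    fin_cases i <;> exact ⟨j, by simp [F10]⟩
  · rintro ⟨j, h | h | h | h⟩
    exacts [⟨(j, 0), h.symm⟩, ⟨(j, 1), h.symm⟩, ⟨(j, 2), h.symm⟩, ⟨(j, 3), h.symm⟩]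

lemma edgeFinset_eq (s : ℕ) [Fintype (G10 s).edgeSet] : (G10 s).edgeFinset = E10 s := by
  ext e
  induction e using Sym2.ind with
  | _ x y =>
    rw [mem_edgeFinset, mem_edgeSet, mem_E10]
    cases x <;> cases y <;> simp [G10, Sym2.eq_iff]

def w10 (s : ℕ) : V10 s → ℕ
  | .a0 j => j.1 + 1
  | .a1 j => s + j.1 + 1
  | .b1 j => 4 * s + 4 * j.1 + 3
  | .v0 => 2 * s * s + s
  | .u0 => 3 * s * s + s
  | .u1 => 3 * s * s

lemma gauss (s : ℕ) : (∑ j : Fin s, (j : ℕ)) * 2 + s = s * s := by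
  rw [Fin.sum_univ_eq_sum_range (fun i => i) s, Finset.sum_range_id_mul_two]
  cases s with
  | zero => simp
  | succ t => simp [Nat.succ_sub_one]; ring

lemma vertexSum_eq (s : ℕ) (v : V10 s) :
    vertexSum (G10 s) (f10 s) v = w10 s v := by
  rw [vertexSum, edgeFinset_eq, E10,
    Finset.sum_image (fun a _ b _ h => F10_inj s h)]
  rw [Fintype.sum_prod_type]
  simp only [Fin.sum_univ_four]
  have hg := gauss s
  cases v with
  | a0 k =>
      simp [F10, f10, g10, Sym2.mem_iff, Finset.sum_ite_eq, w10]
  | a1 k =>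
      simp [F10, f10, g10, Sym2.mem_iff, Finset.sum_ite_eq, w10]
      omega
  | b1 k =>
      simp [F10, f10, g10, Sym2.mem_iff, Finset.sum_ite_eq, w10,
        Finset.sum_add_distrib]
      omega
  | v0 =>
      simp [F10, f10, g10, Sym2.mem_iff, w10, Finset.sum_add_distrib,
        Finset.sum_comm, ← Finset.sum_mul, Finset.mul_sum]
      nlinarith [hg]
  | u0 =>
      have h2 : ∑ x : Fin s, 2 * (x.1 + 1) = (∑ x : Fin s, x.1) * 2 + 2 * s := by
        simp only [Nat.mul_comm 2, add_mul, Finset.sum_add_distrib,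
          Finset.sum_const, Finset.card_univ, Fintype.card_fin, smul_eq_mul,
          ← Finset.sum_mul]
      simp [F10, f10, g10, Sym2.mem_iff, w10, Finset.sum_add_distrib,
        ← Finset.sum_mul, Finset.mul_sum, h2]
      nlinarith [hg]
  | u1 =>
      have h2 : ∑ x : Fin s, (2 * s + 2 * (x.1 + 1) - 1) =
          ∑ x : Fin s, (2 * s + 2 * x.1 + 1) :=
        Finset.sum_congr rfl (fun x _ => by omega)
      have h3 : ∑ x : Fin s, 2 * x.1 = (∑ x : Fin s, x.1) * 2 := by
        simp [Finset.mul_sum, Nat.mul_comm]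
      simp [F10, f10, g10, Sym2.mem_iff, w10, Finset.sum_add_distrib, h2, h3,
        ← Finset.sum_mul]
      nlinarith [hg]

lemma w10_inj (s : ℕ) (hs : 2 ≤ s) : Function.Injective (w10 s) := by
  intro x y h
  cases x <;> cases y <;>
    simp only [w10, V10.a0.injEq, V10.a1.injEq, V10.b1.injEq] at h ⊢ <;>
    first
      | rfl
      | (rename_i j k; obtain ⟨j, hj⟩ := j; obtain ⟨k, hk⟩ := k;
         simp only [Fin.mk.injEq, Fin.val_mk] at h ⊢; omega)
      | (exfalso
         first
           | (rename_i j k; obtain ⟨j, hj⟩ := j; obtain ⟨k, hk⟩ := k; omega)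
           | (rename_i j; obtain ⟨j, hj⟩ := j;
              first
                | omega
                | nlinarith
                | (have h3 : s ≤ 3 := by nlinarith
                   interval_cases s <;> omega))
           | omega
           | nlinarith)

lemma card_E10 (s : ℕ) [Fintype (G10 s).edgeSet] :
    (G10 s).edgeFinset.card = 4 * s := by
  rw [edgeFinset_eq, E10, Finset.card_image_of_injective _ (F10_inj s),
    Finset.card_univ, Fintype.card_prod, Fintype.card_fin, Fintype.card_fin]
  ring

lemma mem_edgeSet_iff (s : ℕ) (e : Sym2 (V10 s)) :
    e ∈ (G10 s).edgeSet ↔ ∃ j : Fin s, e = s(.a0 j, .v0) ∨ e = s(.a1 j, .v0) ∨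
      e = s(.b1 j, .u1) ∨ e = s(.b1 j, .u0) := by
  classical
  rw [← mem_E10, ← edgeFinset_eq, mem_edgeFinset]

lemma f10_vals (s : ℕ) (j : Fin s) :
    f10 s s(V10.a0 j, V10.v0) = j.1 + 1 ∧
    f10 s s(V10.a1 j, V10.v0) = s + j.1 + 1 ∧
    f10 s s(V10.b1 j, V10.u1) = 2 * s + 2 * j.1 + 1 ∧
    f10 s s(V10.b1 j, V10.u0) = 2 * s + 2 * j.1 + 2 := by
  refine ⟨by simp [f10, g10], by simp [f10, g10]; omega,
    by simp [f10, g10]; omega, by simp [f10, g10]; omega⟩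

lemma bijOn10 (s : ℕ) :
    Set.BijOn (f10 s) (G10 s).edgeSet (Set.Icc 1 (4 * s)) := by
  refine ⟨?_, ?_, ?_⟩
  · intro e he
    rw [mem_edgeSet_iff] at he
    obtain ⟨j, rfl | rfl | rfl | rfl⟩ := he <;>
      · obtain ⟨h1, h2, h3, h4⟩ := f10_vals s j
        have hj := j.isLt
        simp only [h1, h2, h3, h4, Set.mem_Icc] <;> omega
  · intro e he e' he' hee
    rw [mem_edgeSet_iff] at he he'
    obtain ⟨j, rfl | rfl | rfl | rfl⟩ := he <;>
      obtain ⟨k, rfl | rfl | rfl | rfl⟩ := he' <;>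
        (obtain ⟨h1, h2, h3, h4⟩ := f10_vals s j;
         obtain ⟨g1, g2, g3, g4⟩ := f10_vals s k;
         have hj := j.isLt; have hk := k.isLt;
         simp only [h1, h2, h3, h4, g1, g2, g3, g4] at hee) <;>
      first
        | (simp only [Sym2.eq_iff, V10.a0.injEq, V10.a1.injEq, V10.b1.injEq,
             Fin.ext_iff, reduceCtorEq, and_true, true_and, and_false,
             false_and, or_false, false_or, and_self, or_self] <;> omega)
        | omega
        | (exfalso; omega)
  · intro n hn
    obtain ⟨hn1, hn2⟩ := hn
    by_cases c1 : n ≤ s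
    · refine ⟨s(.a0 ⟨n - 1, by omega⟩, .v0), ?_, ?_⟩
      · rw [mem_edgeSet_iff]; exact ⟨_, Or.inl rfl⟩
      · have := (f10_vals s ⟨n - 1, by omega⟩).1; simp only [this]; omega
    · by_cases c2 : n ≤ 2 * s
      · refine ⟨s(.a1 ⟨n - s - 1, by omega⟩, .v0), ?_, ?_⟩
        · rw [mem_edgeSet_iff]; exact ⟨_, Or.inr (Or.inl rfl)⟩
        · have := (f10_vals s ⟨n - s - 1, by omega⟩).2.1; simp only [this]; omega
      · by_cases c3 : n % 2 = 1
        · refine ⟨s(.b1 ⟨(n - 2 * s - 1) / 2, by omega⟩, .u1), ?_, ?_⟩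
          · rw [mem_edgeSet_iff]; exact ⟨_, Or.inr (Or.inr (Or.inl rfl))⟩
          · have := (f10_vals s ⟨(n - 2 * s - 1) / 2, by omega⟩).2.2.1
            simp only [this, Fin.val_mk]; omega
        · refine ⟨s(.b1 ⟨(n - 2 * s - 1) / 2, by omega⟩, .u0), ?_, ?_⟩
          · rw [mem_edgeSet_iff]; exact ⟨_, Or.inr (Or.inr (Or.inr rfl))⟩
          · have := (f10_vals s ⟨(n - 2 * s - 1) / 2, by omega⟩).2.2.2
            simp only [this, Fin.val_mk]; omega

/-- For every `s ≥ 2`, the graph `G10 s ≅ K_{1,s} × P_3` is antimagic; in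
particular the labeling `f10 s` is a bijection from the edge set onto
`{1, …, 4s}` inducing pairwise distinct vertex sums. -/
theorem G10_antimagic (s : ℕ) (hs : 2 ≤ s) :
    IsAntimagic (G10 s) ∧
    Set.BijOn (f10 s) (G10 s).edgeSet (Set.Icc 1 (4 * s)) ∧
    Function.Injective (vertexSum (G10 s) (f10 s)) := by
  have hinj : Function.Injective (vertexSum (G10 s) (f10 s)) := by
    intro x y h
    rw [vertexSum_eq, vertexSum_eq] at h
    exact w10_inj s hs h
  refine ⟨⟨f10 s, ?_, hinj⟩, bijOn10 s, hinj⟩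
  rw [card_E10]
  exact bijOn10 s
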